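/- arXiv:cs/0003035 — 2 statements merged into one kernel-verified Lean document; each statement's English description precedes it below -/
import Mathlib

section
/- Every extension base is a maximal consistent subset of the formulas of the theory: for every linear order e on ι, (i) B(e) ⊆ {form d | d : ι}, (ii) B(e) ∪ SPO is satisfiable, and (iii) for every d : ι with form d ∉ B(e), the theory B(e) ∪ {form d} ∪ SPO is unsatisfiable. -/
open FirstOrder Language

namespace Brevis

/-- The base language with a single binary relation symbol `R`. -/
def baseLang : Language where
  Functions := fun _ => Empty
  Relations := fun n => match n with
    | 2 => Unit
    | _ => Empty

/-- The binary relation symbol `R` of `baseLang`. -/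
def Rsym : baseLang.Relations 2 := Unit.unit

/-- The base language with a binary relation symbol `R` and one 0-ary relation symbol `P`. -/
def baseLangP : Language where
  Functions := fun _ => Empty
  Relations := fun n => match n with
    | 0 => Unit
    | 2 => Unit
    | _ => Empty

/-- The binary relation symbol `R` of `baseLangP`. -/
def RsymP : baseLangP.Relations 2 := Unit.unit

/-- The 0-ary relation symbol `P` of `baseLangP`. -/
def Psym : baseLangP.Relations 0 := Unit.unit

/-- The atomic sentence `p` given by the propositional symbol `P`. -/
def pSent (ι : Type) : (baseLangP[[ι]]).Sentence :=
  Relations.formula (Sum.inl Psym) ![]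

variable (L₀ : FirstOrder.Language.{0, 0}) (R : L₀.Relations 2) (ι : Type) [Fintype ι]

/-- The atomic sentence `d < d'`, i.e. `R (c_d) (c_d')`. -/
def ltSent (d d' : ι) : (L₀[[ι]]).Sentence :=
  Relations.boundedFormula₂ (Sum.inl R) (L₀.con d).term (L₀.con d').term

/-- The theory `SPO` asserting that `R` is a strict partial order (irreflexive and transitive). -/
def spo : (L₀[[ι]]).Theory :=
  {Relations.irreflexive (Sum.inl R), Relations.transitive (Sum.inl R)}

/-- A set of sentences is consistent iff together with `SPO` it is satisfiable. -/
def Consistent (S : (L₀[[ι]]).Theory) : Prop :=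
  Theory.IsSatisfiable (S ∪ spo L₀ R ι)

open scoped Classical in
/-- The extension base `B(e)` determined by the linear order `e` on the names. -/
noncomputable def base (e : LinearOrder ι) (form : ι → (L₀[[ι]]).Sentence) :
    (L₀[[ι]]).Theory :=
  letI := e
  (Finset.univ.sort (· ≤ · : ι → ι → Prop)).foldl
    (fun B d => if Consistent L₀ R ι (B ∪ {form d}) then B ∪ {form d} else B) ∅

/-- The deductive closure (modulo `SPO`) of a set of sentences:
all sentences satisfied in every model of `S ∪ SPO`. -/
def closure (S : (L₀[[ι]]).Theory) : Set (L₀[[ι]]).Sentence :=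
  {φ | (S ∪ spo L₀ R ι) ⊨ᵇ φ}

/-- The extension `E(e)` generated by the linear order `e`. -/
noncomputable def extension (e : LinearOrder ι) (form : ι → (L₀[[ι]]).Sentence) :
    Set (L₀[[ι]]).Sentence :=
  closure L₀ R ι (base L₀ R ι e form)

/-- A strict partial order `p` on the names is compatible with `S` iff
`S ∪ SPO ∪ {d < d' | p d d'} ∪ {¬ (d < d') | ¬ p d d'}` is satisfiable. -/
def Compatible (p : ι → ι → Prop) (S : (L₀[[ι]]).Theory) : Prop :=
  Theory.IsSatisfiable
    (S ∪ spo L₀ R ι ∪ {φ | ∃ d d', p d d' ∧ φ = ltSent L₀ R ι d d'} ∪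
      {φ | ∃ d d', ¬ p d d' ∧ φ = ∼(ltSent L₀ R ι d d')})

/-- `Exts form S`: the set of extensions `E(e)` where `e` is a linear order extending some
strict partial order compatible with `S`. -/
def Exts (form : ι → (L₀[[ι]]).Sentence) (S : (L₀[[ι]]).Theory) :
    Set (Set (L₀[[ι]]).Sentence) :=
  {E | ∃ (e : LinearOrder ι) (p : ι → ι → Prop), IsStrictOrder ι p ∧
    Compatible L₀ R ι p S ∧ (∀ d d', p d d' → e.lt d d') ∧ E = extension L₀ R ι e form}

/-- The operator `C`. -/
def C (form : ι → (L₀[[ι]]).Sentence) (S : (L₀[[ι]]).Theory) : (L₀[[ι]]).Theory :=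
  ⋂₀ Exts L₀ R ι form S

/-- The least fixed point of `C` (Knaster–Tarski): the set of accepted conclusions. -/
def lfpC (form : ι → (L₀[[ι]]).Sentence) : (L₀[[ι]]).Theory :=
  sInf {S | C L₀ R ι form S ⊆ S}

/-!
The base is built greedily: a formula is added exactly when the result stays consistent, so
consistency is preserved along the way (starting from `∅`, which is consistent because `SPO`
has a model). Satisfiability is antitone in the theory, so a formula rejected at its step stays
inconsistent with every later, larger base, in particular with `B(e)`.
-/

section Greedy

variable {α ι : Type*} (P : Set α → Prop) (f : ι → α)

open scoped Classical in
noncomputable def greedyStep (B : Set α) (d : ι) : Set α :=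
  if P (B ∪ {f d}) then B ∪ {f d} else B

theorem subset_greedyStep (B : Set α) (d : ι) : B ⊆ greedyStep P f B d := by
  unfold greedyStep
  split_ifs
  exacts [Set.subset_union_left, subset_rfl]

theorem greedyStep_subset (B : Set α) (d : ι) : greedyStep P f B d ⊆ B ∪ Set.range f := by
  unfold greedyStep
  split_ifs
  exacts [Set.union_subset_union_right _ (by simp), Set.subset_union_left]

theorem subset_foldl_greedyStep (l : List ι) (B : Set α) :
    B ⊆ l.foldl (greedyStep P f) B := by
  induction l generalizing B with
  | nil => exact subset_rfl
  | cons d l ih => exact (subset_greedyStep P f B d).trans (ih _)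

theorem foldl_greedyStep_subset (l : List ι) (B : Set α) :
    l.foldl (greedyStep P f) B ⊆ B ∪ Set.range f := by
  induction l generalizing B with
  | nil => exact Set.subset_union_left
  | cons d l ih =>
    calc (d :: l).foldl (greedyStep P f) B
        ⊆ greedyStep P f B d ∪ Set.range f := ih _
      _ ⊆ B ∪ Set.range f :=
        Set.union_subset (greedyStep_subset P f B d) Set.subset_union_right

theorem foldl_greedyStep_of (l : List ι) {B : Set α} (hB : P B) :
    P (l.foldl (greedyStep P f) B) := by
  induction l generalizing B with
  | nil => exact hB
  | cons d l ih =>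
    refine ih ?_
    unfold greedyStep
    split_ifs with h
    exacts [h, hB]

theorem not_foldl_greedyStep_union (hP : Antitone P) {l : List ι} {d : ι} (hd : d ∈ l)
    (B : Set α) (hnot : f d ∉ l.foldl (greedyStep P f) B) :
    ¬ P (l.foldl (greedyStep P f) B ∪ {f d}) := by
  induction l generalizing B with
  | nil => simp at hd
  | cons d' l ih =>
    rcases List.mem_cons.1 hd with rfl | hd
    · have hrej : ¬ P (B ∪ {f d}) := by
        intro hacc
        apply hnot
        refine subset_foldl_greedyStep P f l _ ?_
        rw [greedyStep, if_pos hacc]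
        exact Set.mem_union_right _ rfl
      have hstep : greedyStep P f B d = B := if_neg hrej
      rw [List.foldl_cons, hstep] at hnot ⊢
      exact fun h => hrej (hP (Set.union_subset_union_left _
        (subset_foldl_greedyStep P f l B)) h)
    · exact ih hd _ hnot

end Greedy

section Base

variable (L₀ : FirstOrder.Language.{0, 0}) (R : L₀.Relations 2) (ι : Type)

theorem spo_isSatisfiable : Theory.IsSatisfiable (spo L₀ R ι) := by
  let _ : L₀.Structure PUnit := ⟨fun _ _ => PUnit.unit, fun _ _ => False⟩
  let _ : (constantsOn ι).Structure PUnit := constantsOn.structure fun _ => PUnit.unit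
  refine ⟨{ Carrier := PUnit, is_model := ⟨fun {φ} hφ => ?_⟩ }⟩
  rcases hφ with rfl | rfl
  · exact Relations.realize_irreflexive.2 ⟨fun _ h => h⟩
  · exact Relations.realize_transitive.2 ⟨fun _ _ _ h => h.elim⟩

theorem consistent_empty : Consistent L₀ R ι ∅ := by
  simpa [Consistent] using spo_isSatisfiable L₀ R ι

theorem antitone_consistent : Antitone (Consistent L₀ R ι) :=
  fun _ _ hST hT => hT.mono (Set.union_subset_union_left _ hST)

variable {ι} [Fintype ι] (e : LinearOrder ι) (form : ι → (L₀[[ι]]).Sentence)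

theorem base_eq_foldl :
    base L₀ R ι e form =
      (letI := e; (Finset.univ.sort (· ≤ · : ι → ι → Prop)).foldl
        (greedyStep (Consistent L₀ R ι) form) ∅) :=
  rfl

theorem base_subset_range : base L₀ R ι e form ⊆ Set.range form := by
  simpa [base_eq_foldl] using foldl_greedyStep_subset _ form _ ∅

theorem consistent_base : Consistent L₀ R ι (base L₀ R ι e form) := by
  rw [base_eq_foldl]
  exact foldl_greedyStep_of _ form _ (consistent_empty L₀ R ι)

theorem not_consistent_base_union {d : ι} (hd : form d ∉ base L₀ R ι e form) :
    ¬ Consistent L₀ R ι (base L₀ R ι e form ∪ {form d}) := by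
  let _ := e
  rw [base_eq_foldl] at hd ⊢
  exact not_foldl_greedyStep_union _ form (antitone_consistent L₀ R ι)
    (Finset.mem_sort _ |>.2 (Finset.mem_univ d)) ∅ hd

end Base

/-- Every extension base is a maximal consistent subset of the formulas of the theory. -/
theorem base_maximal_consistent (ι : Type) [Fintype ι]
    (form : ι → (baseLang[[ι]]).Sentence) (e : LinearOrder ι) :
    base baseLang Rsym ι e form ⊆ Set.range form ∧
    Theory.IsSatisfiable (base baseLang Rsym ι e form ∪ spo baseLang Rsym ι) ∧
    ∀ d : ι, form d ∉ base baseLang Rsym ι e form →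
      ¬ Theory.IsSatisfiable (base baseLang Rsym ι e form ∪ {form d} ∪ spo baseLang Rsym ι) :=
  ⟨base_subset_range _ _ e form, consistent_base _ _ e form,
    fun _ hd => not_consistent_base_union _ _ e form hd⟩

end Brevis
end

section
/- If S is a consistent set of L-sentences (i.e. S ∪ SPO is satisfiable), then the set of compatible extensions Ext(S) is nonempty. (Step in the proof of Proposition 3.) -/
/-!
A model `M` of `S ∪ SPO` orders the names by `d < d'` iff `M ⊨ R(c_d, c_d')`. This is a strict
order because `M ⊨ SPO`, and it is compatible with `S`, witnessed by `M` itself. By Szpilrajn's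
theorem it extends to a linear order `e`, and then `E(e) ∈ Ext(S)`.
-/

open FirstOrder Language

namespace Brevis

variable (L₀ : FirstOrder.Language.{0, 0}) (R : L₀.Relations 2) (ι : Type) [Fintype ι]

theorem exists_linearOrder_lt_of_isStrictOrder {α : Type*} (p : α → α → Prop)
    [IsStrictOrder α p] : ∃ e : LinearOrder α, ∀ a b, p a b → e.lt a b := by
  let := partialOrderOfSO p
  exact ⟨(inferInstance : LinearOrder (LinearExtension α)), fun a b hab =>
    (toLinearExtension.monotone.strictMono_of_injective fun _ _ h => h) hab⟩

section Models

variable {L₀ : FirstOrder.Language.{0, 0}} {R : L₀.Relations 2} {ι : Type}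
  {M : Type*} [(L₀[[ι]]).Structure M]

theorem realize_ltSent (d d' : ι) :
    M ⊨ ltSent L₀ R ι d d' ↔
      Structure.RelMap (L := L₀[[ι]]) (Sum.inl R) ![(L₀.con d : M), (L₀.con d' : M)] := by
  refine BoundedFormula.realize_rel₂.trans ?_
  simp only [Term.realize_constants]

theorem isStrictOrder_of_model_spo (hM : M ⊨ spo L₀ R ι) :
    IsStrictOrder ι fun d d' => M ⊨ ltSent L₀ R ι d d' := by
  have hirr := Relations.realize_irreflexive.mp (hM.realize_of_mem _ (Set.mem_insert _ _))
  have htr := Relations.realize_transitive.mp (hM.realize_of_mem _ (Set.mem_insert_of_mem _ rfl))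
  simp only [realize_ltSent]
  exact { irrefl := fun d => hirr.irrefl _, trans := fun _ _ _ => htr.trans _ _ _ }

theorem compatible_of_model {S : (L₀[[ι]]).Theory} [Nonempty M] (hM : M ⊨ S ∪ spo L₀ R ι) :
    Compatible L₀ R ι (fun d d' => M ⊨ ltSent L₀ R ι d d') S := by
  refine @Theory.Model.isSatisfiable _ _ M _ _ ?_
  refine Theory.model_union_iff.2 ⟨Theory.model_union_iff.2 ⟨hM, ?_⟩, ?_⟩ <;>
    refine ⟨?_⟩ <;> rintro _ ⟨d, d', hdd', rfl⟩
  · exact hdd'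
  · exact (Sentence.realize_not M).2 hdd'

end Models

/-- If `S` is consistent then the set of compatible extensions is nonempty. -/
theorem Exts_nonempty_of_consistent (ι : Type) [Fintype ι]
    (form : ι → (baseLang[[ι]]).Sentence) (S : (baseLang[[ι]]).Theory)
    (h : Theory.IsSatisfiable (S ∪ spo baseLang Rsym ι)) :
    (Exts baseLang Rsym ι form S).Nonempty := by
  obtain ⟨M⟩ := h
  have hso := isStrictOrder_of_model_spo (M.is_model.mono Set.subset_union_right)
  obtain ⟨e, he⟩ := @exists_linearOrder_lt_of_isStrictOrder _ _ hso
  exact ⟨_, e, _, hso, compatible_of_model M.is_model, he, rfl⟩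

end Brevis
end
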